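/- Let X_1, …, X_5, Y_1, Y_2, Z be mutually independent random variables with X_i ~ Poiss(λ_i) (λ_i > 0), Y_j ~ Poiss(η_j) (η_j > 0), Z ~ Poiss(γ) (γ > 0). Set μ = λ_1 + ⋯ + λ_5, η = η_1 + η_2, and S = (X_1 + ⋯ + X_5) + 2(Y_1 + Y_2) + 4Z. Fix K ∈ ℕ with P(S = K) > 0. Then for all nonnegative integers x_1,…,x_5, y_1, y_2, z, writing k_1 = x_1 + ⋯ + x_5, k_2 = y_1 + y_2, k_4 = z, and assuming k_1 + 2k_2 + 4k_4 = K, one has P(X = x, Y = y, Z = z | S = K) = [k_1!/(x_1!⋯x_5!)·∏_{i=1}^5 (λ_i/μ)^{x_i}] · [k_2!/(y_1!·y_2!)·(η_1/η)^{y_1}(η_2/η)^{y_2}] · 𝕃(k_1,k_2,k_4), where 𝕃(k_1,k_2,k_4) = (μ^{k_1}/k_1!)(η^{k_2}/k_2!)(γ^{k_4}/k_4!) / Σ_{k_1'+2k_2'+4k_4'=K} (μ^{k_1'}/k_1'!)(η^{k_2'}/k_2'!)(γ^{k_4'}/k_4'!). -/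

import Mathlib

open MeasureTheory ProbabilityTheory Finset NNReal

/-- The denominator of the lucky law: the sum of `μ^{k₁'}/k₁'! · η^{k₂'}/k₂'! · γ^{k₄'}/k₄'!`
over all triples of nonnegative integers `(k₁', k₂', k₄')` with `k₁' + 2k₂' + 4k₄' = K`
(all such triples have entries `≤ K`). -/
noncomputable def luckyDenom (μ η γ : ℝ) (K : ℕ) : ℝ :=
  ∑ t ∈ (Finset.range (K + 1) ×ˢ Finset.range (K + 1) ×ˢ Finset.range (K + 1)).filter
      (fun t => t.1 + 2 * t.2.1 + 4 * t.2.2 = K),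
    μ ^ t.1 / (Nat.factorial t.1 : ℝ) * (η ^ t.2.1 / (Nat.factorial t.2.1 : ℝ)) *
      (γ ^ t.2.2 / (Nat.factorial t.2.2 : ℝ))

/-- The lucky law `𝕃(k₁, k₂, k₄)`. -/
noncomputable def luckyLaw (μ η γ : ℝ) (K k₁ k₂ k₄ : ℕ) : ℝ :=
  (μ ^ k₁ / (Nat.factorial k₁ : ℝ) * (η ^ k₂ / (Nat.factorial k₂ : ℝ)) *
      (γ ^ k₄ / (Nat.factorial k₄ : ℝ))) / luckyDenom μ η γ K

/-! Summing each block of a vector of independent Poisson variables gives, by the multinomial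
theorem, independent Poisson variables with rates `μ`, `η`, `γ`; hence
`P(S = K) = e^{-(μ+η+γ)} · luckyDenom μ η γ K`. The point probability of `(x, y, z)` is
`e^{-(μ+η+γ)} ∏ λᵢ^{xᵢ}/xᵢ! · ∏ ηⱼ^{yⱼ}/yⱼ! · γ^z/z!`, and each block product splits as a
multinomial probability times `μ^{k₁}/k₁!` (resp. `η^{k₂}/k₂!`). The exponentials cancel in the
quotient. -/

open Real Nat

theorem Finset.sum_piAntidiag_prod_pow_div_factorial {ι 𝕜 : Type*} [DecidableEq ι] [Field 𝕜]
    [CharZero 𝕜] (s : Finset ι) (w : ι → 𝕜) (k : ℕ) :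
    ∑ x ∈ piAntidiag s k, ∏ i ∈ s, w i ^ x i / ((x i)! : 𝕜) = (∑ i ∈ s, w i) ^ k / (k ! : 𝕜) := by
  rw [sum_pow_eq_sum_piAntidiag, sum_div]
  refine sum_congr rfl fun x hx => ?_
  have hfac : (∏ i ∈ s, ((x i)! : 𝕜)) * Nat.multinomial s x = k ! := by
    rw [← (mem_piAntidiag.mp hx).1]; exact_mod_cast Nat.multinomial_spec s x
  rw [prod_div_distrib, ← hfac]
  have : ∏ i ∈ s, ((x i)! : 𝕜) ≠ 0 := prod_ne_zero_iff.mpr fun i _ => by simp [factorial_ne_zero]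
  have : (Nat.multinomial s x : 𝕜) ≠ 0 := by simp [Nat.multinomial_pos s x |>.ne']
  field_simp

theorem Finset.prod_pow_div_factorial_eq_multinomial_mul {ι 𝕜 : Type*} [Fintype ι] [Field 𝕜]
    [CharZero 𝕜] (w : ι → 𝕜) (hw : ∑ i, w i ≠ 0) (x : ι → ℕ) :
    ∏ i, w i ^ x i / ((x i)! : 𝕜) =
      (((∑ i, x i)! : 𝕜) / ∏ i, ((x i)! : 𝕜)) * (∏ i, (w i / ∑ i', w i') ^ x i) *
        ((∑ i, w i) ^ (∑ i, x i) / ((∑ i, x i)! : 𝕜)) := by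
  have : ∏ i, ((x i)! : 𝕜) ≠ 0 := prod_ne_zero_iff.mpr fun i _ => by simp [factorial_ne_zero]
  have : ((∑ i, x i)! : 𝕜) ≠ 0 := by simp [factorial_ne_zero]
  simp only [div_pow, prod_div_distrib, prod_pow_eq_pow_sum]
  field_simp

namespace ProbabilityTheory

variable {ι κ : Type*} [Fintype ι] [Fintype κ]

lemma measureReal_pi_poissonMeasure_singleton (r : ι → ℝ≥0) (x : ι → ℕ) :
    (Measure.pi fun i => poissonMeasure (r i)).real {x} =
      exp (-∑ i, (r i : ℝ)) * ∏ i, (r i : ℝ) ^ x i / ((x i)! : ℝ) := by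
  simp only [measureReal_def, Measure.pi_singleton, ENNReal.toReal_prod]
  simp only [← measureReal_def, poissonMeasure_real_singleton, mul_div_assoc, prod_mul_distrib,
    ← exp_sum, sum_neg_distrib]

lemma map_sum_pi_poissonMeasure (r : ι → ℝ≥0) :
    (Measure.pi fun i => poissonMeasure (r i)).map (fun x => ∑ i, x i) =
      poissonMeasure (∑ i, r i) := by
  classical
  refine Measure.ext_of_singleton fun k => ?_
  rw [← ofReal_measureReal, ← ofReal_measureReal, map_measureReal_apply (by fun_prop)
    (measurableSet_singleton k)]
  have hfiber : (fun x : ι → ℕ => ∑ i, x i) ⁻¹' {k} = ↑(piAntidiag (univ : Finset ι) k) := by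
    ext x; simp [mem_piAntidiag]
  rw [hfiber, ← sum_measureReal_singleton]
  simp only [measureReal_pi_poissonMeasure_singleton, ← mul_sum,
    sum_piAntidiag_prod_pow_div_factorial, poissonMeasure_real_singleton, NNReal.coe_sum,
    mul_div_assoc]

lemma measureReal_prod_poissonMeasure_setOf_eq (a b c : ℝ≥0) (K : ℕ) :
    ((poissonMeasure a).prod ((poissonMeasure b).prod (poissonMeasure c))).real
        {t : ℕ × ℕ × ℕ | t.1 + 2 * t.2.1 + 4 * t.2.2 = K} =
      exp (-(a + b + c : ℝ)) * luckyDenom a b c K := by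
  have hfinite : {t : ℕ × ℕ × ℕ | t.1 + 2 * t.2.1 + 4 * t.2.2 = K} =
      ↑((range (K + 1) ×ˢ range (K + 1) ×ˢ range (K + 1)).filter
        (fun t : ℕ × ℕ × ℕ => t.1 + 2 * t.2.1 + 4 * t.2.2 = K)) := by
    ext t
    simp only [Set.mem_ofPred_eq, coe_filter, mem_product, mem_range]
    omega
  rw [hfinite, ← sum_measureReal_singleton, luckyDenom, mul_sum]
  refine sum_congr rfl fun ⟨i, j, l⟩ _ => ?_
  rw [← Set.singleton_prod_singleton, ← Set.singleton_prod_singleton, measureReal_prod_prod,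
    measureReal_prod_prod, poissonMeasure_real_singleton, poissonMeasure_real_singleton,
    poissonMeasure_real_singleton, neg_add, neg_add, exp_add, exp_add]
  ring

lemma measureReal_pi_prod_poissonMeasure_singleton (lam : ι → ℝ≥0) (eta : κ → ℝ≥0) (gam : ℝ≥0)
    (x : ι → ℕ) (y : κ → ℕ) (z : ℕ) :
    ((Measure.pi fun i => poissonMeasure (lam i)).prod
        ((Measure.pi fun j => poissonMeasure (eta j)).prod (poissonMeasure gam))).real
      {(x, y, z)} =
      exp (-(∑ i, (lam i : ℝ) + ∑ j, (eta j : ℝ) + gam)) *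
        ((∏ i, (lam i : ℝ) ^ x i / ((x i)! : ℝ)) *
          ((∏ j, (eta j : ℝ) ^ y j / ((y j)! : ℝ)) * ((gam : ℝ) ^ z / (z ! : ℝ)))) := by
  rw [← Set.singleton_prod_singleton, ← Set.singleton_prod_singleton, measureReal_prod_prod,
    measureReal_prod_prod, measureReal_pi_poissonMeasure_singleton,
    measureReal_pi_poissonMeasure_singleton, poissonMeasure_real_singleton, neg_add, neg_add,
    exp_add, exp_add]
  ring

lemma measureReal_pi_prod_poissonMeasure_setOf_eq (lam : ι → ℝ≥0) (eta : κ → ℝ≥0) (gam : ℝ≥0)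
    (K : ℕ) :
    ((Measure.pi fun i => poissonMeasure (lam i)).prod
        ((Measure.pi fun j => poissonMeasure (eta j)).prod (poissonMeasure gam))).real
      {p : (ι → ℕ) × (κ → ℕ) × ℕ | (∑ i, p.1 i) + 2 * (∑ j, p.2.1 j) + 4 * p.2.2 = K} =
      exp (-(∑ i, (lam i : ℝ) + ∑ j, (eta j : ℝ) + gam)) *
        luckyDenom (∑ i, (lam i : ℝ)) (∑ j, (eta j : ℝ)) gam K := by
  set sums : (ι → ℕ) × (κ → ℕ) × ℕ → ℕ × ℕ × ℕ :=
    Prod.map (fun x => ∑ i, x i) (Prod.map (fun y => ∑ j, y j) id)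
  have hsums : Measurable sums := by fun_prop
  have hlaw : ((Measure.pi fun i => poissonMeasure (lam i)).prod
      ((Measure.pi fun j => poissonMeasure (eta j)).prod (poissonMeasure gam))).map sums =
      (poissonMeasure (∑ i, lam i)).prod
        ((poissonMeasure (∑ j, eta j)).prod (poissonMeasure gam)) := by
    rw [← Measure.map_prod_map _ _ (by fun_prop) (by fun_prop),
      ← Measure.map_prod_map _ _ (by fun_prop) measurable_id, Measure.map_id,
      map_sum_pi_poissonMeasure, map_sum_pi_poissonMeasure]
  rw [show {p : (ι → ℕ) × (κ → ℕ) × ℕ | (∑ i, p.1 i) + 2 * (∑ j, p.2.1 j) + 4 * p.2.2 = K} =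
      sums ⁻¹' {t | t.1 + 2 * t.2.1 + 4 * t.2.2 = K} from rfl,
    ← map_measureReal_apply hsums (Set.to_countable _).measurableSet, hlaw,
    measureReal_prod_poissonMeasure_setOf_eq]
  push_cast
  rfl

end ProbabilityTheory

theorem fine_structure_law_general
    (lam : Fin 5 → ℝ≥0) (hlam : ∀ i, 0 < lam i)
    (eta : Fin 2 → ℝ≥0) (heta : ∀ j, 0 < eta j)
    (gam : ℝ≥0) (K : ℕ)
    (hK : 0 < ((Measure.pi fun i => poissonMeasure (lam i)).prod
        ((Measure.pi fun j => poissonMeasure (eta j)).prod (poissonMeasure gam)))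
        {p : (Fin 5 → ℕ) × (Fin 2 → ℕ) × ℕ |
          (∑ i, p.1 i) + 2 * (∑ j, p.2.1 j) + 4 * p.2.2 = K})
    (x : Fin 5 → ℕ) (y : Fin 2 → ℕ) (z : ℕ)
    (k₁ k₂ k₄ : ℕ) (hk₁ : k₁ = ∑ i, x i) (hk₂ : k₂ = y 0 + y 1) (hk₄ : k₄ = z)
    (hcon : k₁ + 2 * k₂ + 4 * k₄ = K) :
    ((Measure.pi fun i => poissonMeasure (lam i)).prod
        ((Measure.pi fun j => poissonMeasure (eta j)).prod (poissonMeasure gam)))[|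
      {p : (Fin 5 → ℕ) × (Fin 2 → ℕ) × ℕ |
        (∑ i, p.1 i) + 2 * (∑ j, p.2.1 j) + 4 * p.2.2 = K}] {(x, y, z)}
      = ENNReal.ofReal
          (((Nat.factorial k₁ : ℝ) / ∏ i, (Nat.factorial (x i) : ℝ)) *
              (∏ i, ((lam i : ℝ) / (∑ i', (lam i' : ℝ))) ^ x i) *
            (((Nat.factorial k₂ : ℝ) /
                ((Nat.factorial (y 0) : ℝ) * (Nat.factorial (y 1) : ℝ))) *
              ((eta 0 : ℝ) / ((eta 0 : ℝ) + (eta 1 : ℝ))) ^ y 0 *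
              ((eta 1 : ℝ) / ((eta 0 : ℝ) + (eta 1 : ℝ))) ^ y 1) *
            luckyLaw (∑ i, (lam i : ℝ)) ((eta 0 : ℝ) + (eta 1 : ℝ)) (gam : ℝ) K k₁ k₂ k₄) := by
  subst k₁ k₂ k₄
  set E := {p : (Fin 5 → ℕ) × (Fin 2 → ℕ) × ℕ |
    (∑ i, p.1 i) + 2 * (∑ j, p.2.1 j) + 4 * p.2.2 = K}
  have hxyz : {(x, y, z)} ⊆ E := by
    simpa [E, Fin.sum_univ_two] using hcon
  have hevent := measureReal_pi_prod_poissonMeasure_setOf_eq lam eta gam K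
  have hpos : 0 < exp (-(∑ i, (lam i : ℝ) + ∑ j, (eta j : ℝ) + gam)) *
      luckyDenom (∑ i, (lam i : ℝ)) (∑ j, (eta j : ℝ)) gam K := by
    rwa [← ofReal_measureReal, hevent, ENNReal.ofReal_pos] at hK
  have hx := prod_pow_div_factorial_eq_multinomial_mul (fun i => (lam i : ℝ))
    (sum_pos (fun i _ => NNReal.coe_pos.mpr (hlam i)) univ_nonempty).ne' x
  have hy := prod_pow_div_factorial_eq_multinomial_mul (fun j => (eta j : ℝ))
    (sum_pos (fun j _ => NNReal.coe_pos.mpr (heta j)) univ_nonempty).ne' y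
  rw [cond_apply (Set.to_countable E).measurableSet, Set.inter_eq_self_of_subset_right hxyz,
    ← ofReal_measureReal, ← ofReal_measureReal, hevent,
    measureReal_pi_prod_poissonMeasure_singleton, mul_comm, ← div_eq_mul_inv,
    ← ENNReal.ofReal_div_of_pos hpos, mul_div_mul_left _ _ (exp_pos _).ne', hx, hy, luckyLaw]
  congr 1
  simp only [Fin.sum_univ_two, Fin.prod_univ_two]
  ring

/-- The approximate fine structure law with `K` additional neutrons: conditionally on
`S = (X₁+⋯+X₅) + 2(Y₁+Y₂) + 4Z = K`, the probability of a fine configuration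
`(x, y, z)` with groupings `k₁ = ∑ xᵢ`, `k₂ = y₁ + y₂`, `k₄ = z` and
`k₁ + 2k₂ + 4k₄ = K` is the product of two multinomial probabilities weighted by the
lucky law `𝕃(k₁, k₂, k₄)`. -/
theorem fine_structure_law
    (lam : Fin 5 → ℝ≥0) (hlam : ∀ i, 0 < lam i)
    (eta : Fin 2 → ℝ≥0) (heta : ∀ j, 0 < eta j)
    (gam : ℝ≥0) (hgam : 0 < gam) (K : ℕ)
    (hK : 0 < ((Measure.pi fun i => poissonMeasure (lam i)).prod
        ((Measure.pi fun j => poissonMeasure (eta j)).prod (poissonMeasure gam)))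
        {p : (Fin 5 → ℕ) × (Fin 2 → ℕ) × ℕ |
          (∑ i, p.1 i) + 2 * (∑ j, p.2.1 j) + 4 * p.2.2 = K})
    (x : Fin 5 → ℕ) (y : Fin 2 → ℕ) (z : ℕ)
    (k₁ k₂ k₄ : ℕ) (hk₁ : k₁ = ∑ i, x i) (hk₂ : k₂ = y 0 + y 1) (hk₄ : k₄ = z)
    (hcon : k₁ + 2 * k₂ + 4 * k₄ = K) :
    ((Measure.pi fun i => poissonMeasure (lam i)).prod
        ((Measure.pi fun j => poissonMeasure (eta j)).prod (poissonMeasure gam)))[|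
      {p : (Fin 5 → ℕ) × (Fin 2 → ℕ) × ℕ |
        (∑ i, p.1 i) + 2 * (∑ j, p.2.1 j) + 4 * p.2.2 = K}] {(x, y, z)}
      = ENNReal.ofReal
          (((Nat.factorial k₁ : ℝ) / ∏ i, (Nat.factorial (x i) : ℝ)) *
              (∏ i, ((lam i : ℝ) / (∑ i', (lam i' : ℝ))) ^ x i) *
            (((Nat.factorial k₂ : ℝ) /
                ((Nat.factorial (y 0) : ℝ) * (Nat.factorial (y 1) : ℝ))) *
              ((eta 0 : ℝ) / ((eta 0 : ℝ) + (eta 1 : ℝ))) ^ y 0 *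
              ((eta 1 : ℝ) / ((eta 0 : ℝ) + (eta 1 : ℝ))) ^ y 1) *
            luckyLaw (∑ i, (lam i : ℝ)) ((eta 0 : ℝ) + (eta 1 : ℝ)) (gam : ℝ) K k₁ k₂ k₄) :=
  fine_structure_law_general lam hlam eta heta gam K hK x y z k₁ k₂ k₄ hk₁ hk₂ hk₄ hcon
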